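/- arXiv:2201.00777 — 7 statements merged into one kernel-verified Lean document; each statement's English description precedes it below -/
import Mathlib

section
/- For every integer n ≥ 1, α_n > 1/4. -/
open Finset

/-- `S δ i = δ 1 + ⋯ + δ i`. -/
noncomputable def S (δ : ℕ → ℝ) (i : ℕ) : ℝ := ∑ k ∈ Finset.Icc 1 i, δ k

/-- `max {δ 1 / S 2, …, δ (n-1) / S n, δ n / S n}`.  For `i ≤ n - 1` we have
`min (i+1) n = i+1`, while for `i = n` we get `δ n / S n`. -/
noncomputable def maxRatio (n : ℕ) (δ : ℕ → ℝ) : ℝ :=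
  (insert n (Finset.Icc 1 n)).sup' (Finset.insert_nonempty _ _)
    (fun i => δ i / S δ (min (i + 1) n))

/-- `α n` is the infimum over positive vectors `δ` of the above maximum. -/
noncomputable def alpha (n : ℕ) : ℝ :=
  sInf {r : ℝ | ∃ δ : ℕ → ℝ, (∀ i ∈ Finset.Icc 1 n, 0 < δ i) ∧ r = maxRatio n δ}

lemma S_pos {n : ℕ} {δ : ℕ → ℝ} (hδ : ∀ i ∈ Finset.Icc 1 n, 0 < δ i)
    {i : ℕ} (h1 : 1 ≤ i) (h2 : i ≤ n) : 0 < S δ i := by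
  apply Finset.sum_pos
  · intro k hk
    simp only [Finset.mem_Icc] at hk
    exact hδ k (Finset.mem_Icc.mpr ⟨hk.1, le_trans hk.2 h2⟩)
  · exact ⟨1, Finset.mem_Icc.mpr ⟨le_refl 1, h1⟩⟩

lemma S_succ (δ : ℕ → ℝ) (i : ℕ) : S δ (i+1) = S δ i + δ (i+1) := by
  simp only [S]
  exact Finset.sum_Icc_succ_top (by omega) δ

lemma ratio_le (n : ℕ) (hn : 1 ≤ n) (δ : ℕ → ℝ) (hδ : ∀ i ∈ Finset.Icc 1 n, 0 < δ i)
    (i : ℕ) (hi : i ∈ Finset.Icc 1 n) : δ i ≤ maxRatio n δ * S δ (min (i+1) n) := by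
  have hmem : i ∈ insert n (Finset.Icc 1 n) := Finset.mem_insert_of_mem hi
  have hle : δ i / S δ (min (i + 1) n) ≤ maxRatio n δ :=
    Finset.le_sup' (fun j => δ j / S δ (min (j + 1) n)) hmem
  simp only [Finset.mem_Icc] at hi
  have hSpos : 0 < S δ (min (i+1) n) := S_pos hδ (le_min (by omega) hn) (min_le_right _ _)
  rwa [div_le_iff₀ hSpos] at hle

lemma step_ineq (x e ε : ℝ) (hx : 1 ≤ x) (he : 0 < e) (he2 : e ≤ 1/24) (hεe : 3*ε ≤ e) :
    1/4 + ε ≤ ((x+1)/(2*(x+2)) + 3*e) * (1 - (x/(2*(x+1)) + e)) := by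
  have h1 : (0:ℝ) < x + 1 := by linarith
  have h2 : (0:ℝ) < x + 2 := by linarith
  have hA : (x+1)/(2*(x+2)) ≤ 1/2 := by rw [div_le_iff₀ (by linarith)]; linarith
  have hB : (1:ℝ)/2 ≤ (x+2)/(2*(x+1)) := by rw [le_div_iff₀ (by linarith)]; linarith
  have hAA : (x+1)/(2*(x+2)) * ((x+2)/(2*(x+1))) = 1/4 := by field_simp; ring
  have hC : 1 - (x/(2*(x+1)) + e) = (x+2)/(2*(x+1)) - e := by field_simp; ring
  rw [hC]
  nlinarith [mul_pos he he,
    mul_le_mul_of_nonneg_left hB (by linarith : (0:ℝ) ≤ 3*e),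
    mul_le_mul_of_nonneg_right hA he.le]

set_option maxHeartbeats 2000000 in
lemma key (n : ℕ) (hn : 1 ≤ n) (δ : ℕ → ℝ) (hδ : ∀ i ∈ Finset.Icc 1 n, 0 < δ i) :
    1/4 + 1/(8 * 3^n) ≤ maxRatio n δ := by
  match n, hn with
  | 1, _ =>
    have h := ratio_le 1 le_rfl δ hδ 1 (by simp)
    have hS1 : S δ 1 = δ 1 := by simp [S]
    have hd1 : 0 < δ 1 := hδ 1 (by simp)
    rw [show (1+1) ⊓ 1 = 1 by omega, hS1] at h
    have hc1 : 1 ≤ maxRatio 1 δ := by nlinarith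
    norm_num
    linarith
  | (m+2), _ =>
    set c := maxRatio (m+2) δ with hc
    set ε : ℝ := 1/(8 * 3^(m+2)) with hε
    have hε0 : 0 < ε := by positivity
    clear_value c ε
    have hε3 : ∀ i ≤ m+2, ε * 3^i ≤ 1/8 := by
      intro i hi
      have h3 : (3:ℝ)^i ≤ 3^(m+2) := pow_le_pow_right₀ (by norm_num) hi
      have h3n : (0:ℝ) < 3^(m+2) := by positivity
      rw [hε, div_mul_eq_mul_div, one_mul, div_le_div_iff₀ (by positivity) (by norm_num)]
      nlinarith
    by_contra hcon
    push_neg at hcon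
    have hlast : δ (m+2) ≤ c * S δ (m+2) := by
      have := ratio_le (m+2) (by omega) δ hδ (m+2) (Finset.mem_Icc.mpr ⟨by omega, le_refl _⟩)
      rwa [min_eq_right (Nat.le_succ _), ← hc] at this
    have hSn : 0 < S δ (m+2) := S_pos hδ (by omega) (le_refl _)
    have main : ∀ i, 1 ≤ i → i + 1 ≤ m + 2 →
        S δ i ≤ ((i:ℝ)/(2*((i:ℝ)+1)) + ε*3^i) * S δ (i+1) := by
      intro i hi
      induction i, hi using Nat.le_induction with
      | base =>
        intro h2
        have hS1 : S δ 1 = δ 1 := by simp [S]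
        have h := ratio_le (m+2) (by omega) δ hδ 1 (Finset.mem_Icc.mpr ⟨le_rfl, by omega⟩)
        rw [min_eq_left (by omega), ← hc] at h
        have hS2 : 0 < S δ 2 := S_pos hδ (by omega) (by omega)
        rw [hS1]
        have h2' : δ 1 ≤ (1/4 + ε) * S δ 2 := le_trans h (by nlinarith)
        norm_num
        nlinarith
      | succ i hi ih =>
        intro h2
        have hih := ih (by omega)
        have hSsucc : S δ (i+1) = S δ i + δ (i+1) := S_succ δ i
        have h := ratio_le (m+2) (by omega) δ hδ (i+1) (Finset.mem_Icc.mpr ⟨by omega, by omega⟩)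
        rw [min_eq_left (by omega), ← hc] at h
        have hS1 : 0 < S δ (i+1) := S_pos hδ (by omega) (by omega)
        have hS2 : 0 < S δ (i+2) := S_pos hδ (by omega) (by omega)
        set e : ℝ := ε * 3^i with hedef
        have he0 : 0 < e := by positivity
        have he24 : e ≤ 1/24 := by
          have := hε3 (i+1) (by omega)
          rw [pow_succ] at this
          nlinarith
        have hεe : 3*ε ≤ e := by
          rw [hedef]
          have h3i : (3:ℝ) ≤ 3^i := by
            calc (3:ℝ) = 3^1 := by norm_num
            _ ≤ 3^i := pow_le_pow_right₀ (by norm_num) hi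
          nlinarith
        have hkey := step_ineq (i:ℝ) e ε (by exact_mod_cast hi) he0 he24 hεe
        have hB : (1 - ((i:ℝ)/(2*((i:ℝ)+1)) + e)) * S δ (i+1) ≤ c * S δ (i+2) := by nlinarith
        have hBpos : (0:ℝ) < 1 - ((i:ℝ)/(2*((i:ℝ)+1)) + e) := by
          have hx0 : (0:ℝ) < (i:ℝ) + 1 := by positivity
          have : (i:ℝ)/(2*((i:ℝ)+1)) ≤ 1/2 := by
            rw [div_le_iff₀ (by linarith)]; linarith
          linarith
        have hc2 : c * S δ (i+2) ≤ (1/4 + ε) * S δ (i+2) := by nlinarith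
        have hfin : (1 - ((i:ℝ)/(2*((i:ℝ)+1)) + e)) * S δ (i+1) ≤
            (1 - ((i:ℝ)/(2*((i:ℝ)+1)) + e)) * ((((i:ℝ)+1)/(2*((i:ℝ)+2)) + 3*e) * S δ (i+2)) := by
          calc (1 - ((i:ℝ)/(2*((i:ℝ)+1)) + e)) * S δ (i+1) ≤ (1/4 + ε) * S δ (i+2) :=
                le_trans hB hc2
            _ ≤ _ := by nlinarith
        have hres := le_of_mul_le_mul_left hfin hBpos
        calc S δ (i+1) ≤ (((i:ℝ)+1)/(2*((i:ℝ)+2)) + 3*e) * S δ (i+2) := hres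
          _ = ((↑(i+1):ℝ)/(2*((↑(i+1):ℝ)+1)) + ε*3^(i+1)) * S δ (i+1+1) := by
              push_cast [pow_succ]; ring
    have hm := main (m+1) (by omega) (by omega)
    have hSsucc : S δ (m+2) = S δ (m+1) + δ (m+2) := S_succ δ (m+1)
    have hS1 : 0 < S δ (m+1) := S_pos hδ (by omega) (by omega)
    set s1 := S δ (m+1) with hs1
    set s2 := S δ (m+2) with hs2
    clear_value s1 s2
    clear main
    push_cast at hm
    have hq : ((m:ℝ)+1)/(2*((m:ℝ)+1+1)) ≤ 1/2 := by
      have hm0 : (0:ℝ) ≤ (m:ℝ) := Nat.cast_nonneg m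
      rw [div_le_iff₀ (by linarith)]; linarith
    have h3p : (3:ℝ)^(m+1) ≠ 0 := by positivity
    have hE : ε * 3^(m+1) = 1/24 := by
      rw [hε, pow_succ]
      field_simp
      ring
    have h3 : (3:ℝ) ≤ 3^(m+1) := by
      calc (3:ℝ) = 3^1 := by norm_num
      _ ≤ 3^(m+1) := pow_le_pow_right₀ (by norm_num) (by omega)
    have hε24 : ε ≤ 1/24 := by
      have h1 := mul_le_mul_of_nonneg_left h3 hε0.le
      linarith
    clear hc hε hε3 hδ
    have hupper : s1 ≤ (13/24) * s2 := by
      have hfac : ((m:ℝ)+1)/(2*((m:ℝ)+1+1)) + ε*3^(m+1) ≤ 13/24 := by rw [hE]; linarith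
      have := mul_le_mul_of_nonneg_right hfac hSn.le
      linarith
    have hlow : c * s2 < (1/4 + ε) * s2 :=
      mul_lt_mul_of_pos_right hcon hSn
    have hεS : ε * s2 ≤ (1/24) * s2 := mul_le_mul_of_nonneg_right hε24 hSn.le
    linarith only [hupper, hlow, hεS, hSsucc, hlast, hSn]

theorem alpha_gt_one_quarter : ∀ n : ℕ, 1 ≤ n → alpha n > 1 / 4 := by
  intro n hn
  have hlb : 1/4 + 1/(8*3^n) ≤ alpha n := by
    apply le_csInf
    · exact ⟨maxRatio n (fun _ => 1), fun _ => 1, fun i _ => one_pos, rfl⟩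
    · rintro r ⟨δ, hδ, rfl⟩
      exact key n hn δ hδ
  have hpos : (0:ℝ) < 1/(8*3^n) := by positivity
  linarith
end

section
/- The sequence (α_n) is strictly decreasing: for every integer n ≥ 1, α_{n+1} < α_n. -/
open Finset

noncomputable def rv (n : ℕ) : ℝ := 1 / (4 * Real.cos (Real.pi / ((n:ℝ) + 2)) ^ 2)

noncomputable def sig (n k : ℕ) : ℝ :=
  (2 * Real.cos (Real.pi / ((n:ℝ) + 2))) ^ k * Real.sin ((k:ℝ) * (Real.pi / ((n:ℝ) + 2)))

lemma cos_pos (n : ℕ) (hn : 1 ≤ n) : 0 < Real.cos (Real.pi / ((n:ℝ) + 2)) := by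
  apply Real.cos_pos_of_mem_Ioo
  constructor
  · have := Real.pi_pos
    have h2 : (0:ℝ) < (n:ℝ) + 2 := by positivity
    nlinarith [div_pos Real.pi_pos h2]
  · have h2 : (2:ℝ) < (n:ℝ) + 2 := by
      have : (1:ℝ) ≤ (n:ℝ) := by exact_mod_cast hn
      linarith
    calc Real.pi / ((n:ℝ) + 2) < Real.pi / 2 :=
          div_lt_div_of_pos_left Real.pi_pos (by norm_num) h2

lemma sin_pos (n : ℕ) (k : ℕ) (hk : 1 ≤ k) (hk2 : k ≤ n + 1) :
    0 < Real.sin ((k:ℝ) * (Real.pi / ((n:ℝ) + 2))) := by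
  have hθ : 0 < Real.pi / ((n:ℝ) + 2) := by positivity
  apply Real.sin_pos_of_pos_of_lt_pi
  · have : (1:ℝ) ≤ (k:ℝ) := by exact_mod_cast hk
    nlinarith
  · have hkr : (k:ℝ) < (n:ℝ) + 2 := by
      have : (k:ℝ) ≤ (n:ℝ) + 1 := by exact_mod_cast hk2
      linarith
    have h2 : (0:ℝ) < (n:ℝ) + 2 := by positivity
    rw [mul_div_assoc']
    rw [div_lt_iff₀ h2] at *
    nlinarith [Real.pi_pos]

lemma sig_pos (n k : ℕ) (hn : 1 ≤ n) (hk : 1 ≤ k) (hk2 : k ≤ n + 1) : 0 < sig n k := by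
  have := cos_pos n hn
  have := sin_pos n k hk hk2
  unfold sig
  positivity

lemma rv_pos (n : ℕ) (hn : 1 ≤ n) : 0 < rv n := by
  have := cos_pos n hn
  unfold rv
  positivity

lemma sig_rec (n : ℕ) (hn : 1 ≤ n) (k : ℕ) :
    sig n (k+1) - sig n k = rv n * sig n (k+2) := by
  have hc := cos_pos n hn
  set θ := Real.pi / ((n:ℝ) + 2) with hθ
  set c := Real.cos θ with hcdef
  have e2 : ((k:ℝ)+2) * θ = (((k:ℝ)+1) * θ) + θ := by ring
  have e0 : (k:ℝ) * θ = (((k:ℝ)+1) * θ) - θ := by ring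
  unfold sig rv
  rw [← hθ, ← hcdef]
  push_cast
  rw [e2, e0, Real.sin_add, Real.sin_sub]
  have hcne : c ≠ 0 := ne_of_gt hc
  field_simp
  ring

lemma sig_zero (n : ℕ) : sig n 0 = 0 := by simp [sig]

lemma sig_top (n : ℕ) : sig n (n+2) = 0 := by
  unfold sig
  have h2 : ((n:ℝ) + 2) ≠ 0 := by positivity
  have : ((n:ℝ)+2) * (Real.pi / ((n:ℝ)+2)) = Real.pi := by field_simp
  push_cast
  rw [this, Real.sin_pi, mul_zero]

lemma sig_plateau (n : ℕ) (hn : 1 ≤ n) : sig n (n+1) = sig n n := by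
  have h := sig_rec n hn n
  rw [sig_top, mul_zero] at h
  linarith

noncomputable def dw (n i : ℕ) : ℝ := sig n i - sig n (i - 1)


lemma dw_eq (n : ℕ) (hn : 1 ≤ n) (j : ℕ) : dw n (j+1) = rv n * sig n (j+2) := by
  have h := sig_rec n hn j
  simpa [dw] using h

lemma dw_pos (n i : ℕ) (hn : 1 ≤ n) (hi : 1 ≤ i) (hi2 : i ≤ n) : 0 < dw n i := by
  obtain ⟨j, rfl⟩ : ∃ j, i = j + 1 := ⟨i - 1, by omega⟩
  rw [dw_eq n hn j]
  exact mul_pos (rv_pos n hn) (sig_pos n (j+2) hn (by omega) (by omega))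

lemma S_dw (n : ℕ) (hn : 1 ≤ n) (i : ℕ) : S (dw n) i = sig n i := by
  induction i with
  | zero => simp [S, sig_zero]
  | succ m ih =>
    rw [S, Finset.sum_Icc_succ_top (by omega : 1 ≤ m + 1)]
    rw [show (∑ k ∈ Finset.Icc 1 m, dw n k) = S (dw n) m from rfl, ih]
    simp [dw]

lemma maxRatio_dw (n : ℕ) (hn : 1 ≤ n) : maxRatio n (dw n) ≤ rv n := by
  apply Finset.sup'_le
  intro i hi
  have hi' : 1 ≤ i ∧ i ≤ n := by
    simp only [Finset.mem_insert, Finset.mem_Icc] at hi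
    omega
  obtain ⟨j, rfl⟩ : ∃ j, i = j + 1 := ⟨i - 1, by omega⟩
  rw [S_dw n hn, dw_eq n hn j]
  rcases eq_or_lt_of_le hi'.2 with heq | hlt
  · -- j + 1 = n
    subst heq
    have hmin : min (j + 1 + 1) (j + 1) = j + 1 := by omega
    rw [hmin, show j + 2 = (j+1) + 1 from rfl, sig_plateau (j+1) hn]
    rw [mul_div_assoc, div_self (ne_of_gt (sig_pos (j+1) (j+1) hn (by omega) (by omega))), mul_one]
  · have hmin : min (j + 1 + 1) n = j + 2 := by omega
    rw [hmin]
    rw [mul_div_assoc, div_self (ne_of_gt (sig_pos n (j+2) hn (by omega) (by omega))), mul_one]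

noncomputable def lam (n j : ℕ) : ℝ := sig n (n + 1 - j) - sig n (n - j)

lemma lam_eq (n k : ℕ) (hn : 1 ≤ n) (hk : 1 ≤ k) (hk2 : k ≤ n) :
    lam n k = rv n * sig n (min (n + 2 - k) n) := by
  rcases eq_or_lt_of_le hk with heq | hlt
  · -- k = 1
    obtain rfl : k = 1 := heq.symm
    have h1 : n + 1 - 1 = (n - 1) + 1 := by omega
    have h2 : n - 1 + 2 = n + 1 := by omega
    have hmin : min (n + 2 - 1) n = n := by omega
    rw [lam, hmin, h1, show n - 1 = n - 1 from rfl]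
    have hr := sig_rec n hn (n - 1)
    rw [h2] at hr
    rw [show n - 1 + 1 = n from by omega] at hr
    rw [show n - 1 + 1 = n from by omega, hr, sig_plateau n hn]
  · -- 2 ≤ k
    have h1 : n + 1 - k = (n - k) + 1 := by omega
    have h2 : n + 2 - k = (n - k) + 2 := by omega
    have h3 : min (n + 2 - k) n = (n - k) + 2 := by omega
    rw [lam, h1, h3, sig_rec n hn (n - k)]

lemma lam_pos (n k : ℕ) (hn : 1 ≤ n) (hk : 1 ≤ k) (hk2 : k ≤ n) : 0 < lam n k := by
  rw [lam_eq n k hn hk hk2]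
  exact mul_pos (rv_pos n hn) (sig_pos n _ hn (by omega) (by omega))

lemma telescope (n : ℕ) (b : ℕ) (hb : b ≤ n) :
    ∑ j ∈ Finset.Icc (n + 1 - b) n, lam n j = sig n b := by
  induction b with
  | zero => simp [sig_zero]
  | succ m ih =>
    have hm : m ≤ n := by omega
    have hins : Finset.Icc (n + 1 - (m+1)) n = insert (n - m) (Finset.Icc (n + 1 - m) n) := by
      ext x; simp only [Finset.mem_Icc, Finset.mem_insert]; omega
    rw [hins, Finset.sum_insert (by simp only [Finset.mem_Icc]; omega), ih hm]
    have h1 : n + 1 - (n - m) = m + 1 := by omega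
    have h2 : n - (n - m) = m := by omega
    rw [lam, h1, h2]; ring

lemma lower (n : ℕ) (hn : 1 ≤ n) (δ : ℕ → ℝ) (hδ : ∀ i ∈ Finset.Icc 1 n, 0 < δ i) :
    rv n ≤ maxRatio n δ := by
  set m := maxRatio n δ with hm
  have hS : ∀ j, 1 ≤ j → j ≤ n → 0 < S δ j := by
    intro j h1 h2
    apply Finset.sum_pos
    · intro k hk
      exact hδ k (by simp only [Finset.mem_Icc] at *; omega)
    · exact ⟨1, by simp only [Finset.mem_Icc]; omega⟩
  have key : ∀ i ∈ Finset.Icc 1 n, δ i ≤ m * S δ (min (i + 1) n) := by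
    intro i hi
    have hmem : i ∈ insert n (Finset.Icc 1 n) := Finset.mem_insert_of_mem hi
    have hle : δ i / S δ (min (i + 1) n) ≤ m := by
      rw [hm, maxRatio]
      exact Finset.le_sup' (fun i => δ i / S δ (min (i + 1) n)) hmem
    have hSp : 0 < S δ (min (i + 1) n) := by
      simp only [Finset.mem_Icc] at hi
      exact hS _ (by omega) (by omega)
    calc δ i = (δ i / S δ (min (i + 1) n)) * S δ (min (i + 1) n) := by
            field_simp
      _ ≤ m * S δ (min (i + 1) n) := by
            exact mul_le_mul_of_nonneg_right hle (le_of_lt hSp)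
  -- the swap identity
  have swap : ∑ j ∈ Finset.Icc 1 n, lam n j * S δ (min (j + 1) n)
      = ∑ k ∈ Finset.Icc 1 n, sig n (min (n + 2 - k) n) * δ k := by
    have step1 : ∀ j, S δ (min (j + 1) n)
        = ∑ k ∈ Finset.Icc 1 n, (if k ≤ j + 1 then δ k else 0) := by
      intro j
      rw [S, ← Finset.sum_filter]
      congr 1
      ext x; simp only [Finset.mem_Icc, Finset.mem_filter]; omega
    calc ∑ j ∈ Finset.Icc 1 n, lam n j * S δ (min (j + 1) n)
        = ∑ j ∈ Finset.Icc 1 n, ∑ k ∈ Finset.Icc 1 n,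
            (if k ≤ j + 1 then lam n j * δ k else 0) := by
          apply Finset.sum_congr rfl
          intro j _
          rw [step1 j, Finset.mul_sum]
          apply Finset.sum_congr rfl
          intro k _
          split <;> simp
      _ = ∑ k ∈ Finset.Icc 1 n, ∑ j ∈ Finset.Icc 1 n,
            (if k ≤ j + 1 then lam n j * δ k else 0) := Finset.sum_comm
      _ = ∑ k ∈ Finset.Icc 1 n, sig n (min (n + 2 - k) n) * δ k := by
          apply Finset.sum_congr rfl
          intro k hk
          simp only [Finset.mem_Icc] at hk
          have hfil : ∀ j, (if k ≤ j + 1 then lam n j * δ k else 0)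
              = (if k ≤ j + 1 then lam n j else 0) * δ k := by
            intro j; split <;> simp
          simp_rw [hfil]
          rw [← Finset.sum_mul, ← Finset.sum_filter]
          congr 1
          have hset : (Finset.Icc 1 n).filter (fun j => k ≤ j + 1)
              = Finset.Icc (n + 1 - min (n + 2 - k) n) n := by
            ext x; simp only [Finset.mem_Icc, Finset.mem_filter]; omega
          rw [hset, telescope n _ (by omega)]
  -- combine
  have hA : 0 < ∑ k ∈ Finset.Icc 1 n, lam n k * δ k := by
    apply Finset.sum_pos
    · intro k hk
      simp only [Finset.mem_Icc] at hk
      exact mul_pos (lam_pos n k hn hk.1 hk.2) (hδ k (by simp only [Finset.mem_Icc]; omega))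
    · exact ⟨1, by simp only [Finset.mem_Icc]; omega⟩
  have hineq : ∑ k ∈ Finset.Icc 1 n, lam n k * δ k
      ≤ m * ∑ j ∈ Finset.Icc 1 n, lam n j * S δ (min (j + 1) n) := by
    rw [Finset.mul_sum]
    apply Finset.sum_le_sum
    intro k hk
    simp only [Finset.mem_Icc] at hk
    have := key k (by simp only [Finset.mem_Icc]; omega)
    have hl := lam_pos n k hn hk.1 hk.2
    calc lam n k * δ k ≤ lam n k * (m * S δ (min (k + 1) n)) :=
          mul_le_mul_of_nonneg_left this (le_of_lt hl)
      _ = m * (lam n k * S δ (min (k + 1) n)) := by ring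
  have hident : rv n * ∑ j ∈ Finset.Icc 1 n, lam n j * S δ (min (j + 1) n)
      = ∑ k ∈ Finset.Icc 1 n, lam n k * δ k := by
    rw [swap, Finset.mul_sum]
    apply Finset.sum_congr rfl
    intro k hk
    simp only [Finset.mem_Icc] at hk
    rw [lam_eq n k hn hk.1 hk.2]; ring
  -- so rv n * T = A ≤ m * T with T > 0
  set T := ∑ j ∈ Finset.Icc 1 n, lam n j * S δ (min (j + 1) n) with hT
  have hTpos : 0 < T := by
    apply Finset.sum_pos
    · intro k hk
      simp only [Finset.mem_Icc] at hk
      exact mul_pos (lam_pos n k hn hk.1 hk.2) (hS _ (by omega) (by omega))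
    · exact ⟨1, by simp only [Finset.mem_Icc]; omega⟩
  have : rv n * T ≤ m * T := by rw [hident]; exact hineq
  exact le_of_mul_le_mul_right (by linarith [this]) hTpos

lemma rv_strict (n : ℕ) (hn : 1 ≤ n) : rv (n + 1) < rv n := by
  have h1 := cos_pos n hn
  have h2 := cos_pos (n + 1) (by omega)
  have harg : Real.pi / ((n:ℝ) + 1 + 2) < Real.pi / ((n:ℝ) + 2) := by
    apply div_lt_div_of_pos_left Real.pi_pos (by positivity) (by linarith)
  have hcos : Real.cos (Real.pi / ((n:ℝ) + 2)) < Real.cos (Real.pi / ((n:ℝ) + 1 + 2)) := by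
    apply Real.cos_lt_cos_of_nonneg_of_le_pi
    · positivity
    · have : Real.pi / ((n:ℝ) + 2) ≤ Real.pi / 1 := by
        apply div_le_div_of_nonneg_left (le_of_lt Real.pi_pos) (by norm_num) (by linarith)
      simpa using this
    · exact harg
  unfold rv
  push_cast
  rw [div_lt_div_iff₀ (by nlinarith) (by nlinarith)]
  nlinarith

theorem alpha_strict_anti : ∀ n : ℕ, 1 ≤ n → alpha (n + 1) < alpha n := by
  intro n hn
  have hbdd : ∀ m : ℕ, 1 ≤ m → rv m ∈ lowerBounds
      {r : ℝ | ∃ δ : ℕ → ℝ, (∀ i ∈ Finset.Icc 1 m, 0 < δ i) ∧ r = maxRatio m δ} := by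
    rintro m hm r ⟨δ, hδ, rfl⟩
    exact lower m hm δ hδ
  have hmem : ∀ m : ℕ, 1 ≤ m → maxRatio m (dw m) ∈
      {r : ℝ | ∃ δ : ℕ → ℝ, (∀ i ∈ Finset.Icc 1 m, 0 < δ i) ∧ r = maxRatio m δ} := by
    intro m hm
    exact ⟨dw m, fun i hi => dw_pos m i hm (Finset.mem_Icc.mp hi).1 (Finset.mem_Icc.mp hi).2, rfl⟩
  have h1 : alpha (n + 1) ≤ maxRatio (n + 1) (dw (n + 1)) :=
    csInf_le ⟨rv (n + 1), hbdd (n + 1) (by omega)⟩ (hmem (n + 1) (by omega))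
  have h2 : rv n ≤ alpha n :=
    le_csInf ⟨maxRatio n (dw n), hmem n hn⟩ (hbdd n hn)
  calc alpha (n + 1) ≤ maxRatio (n + 1) (dw (n + 1)) := h1
    _ ≤ rv (n + 1) := maxRatio_dw (n + 1) (by omega)
    _ < rv n := rv_strict n hn
    _ ≤ alpha n := h2
end

section
/- For every real number d ≥ 0, the infimum over all real x > 0 of max{1/(d + 1 + x), x/(d + 1 + 3x)} equals 2/(4 + d + √(d² + 8)). -/
theorem inf_max_eq_weighted_perf_four (d : ℝ) (hd : 0 ≤ d) :
    sInf {y : ℝ | ∃ x : ℝ, 0 < x ∧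
        y = max (1 / (d + 1 + x)) (x / (d + 1 + 3 * x))} =
      2 / (4 + d + Real.sqrt (d ^ 2 + 8)) := by
  have hsnn : 0 ≤ Real.sqrt (d ^ 2 + 8) := Real.sqrt_nonneg _
  have hs2 : Real.sqrt (d ^ 2 + 8) ^ 2 = d ^ 2 + 8 :=
    Real.sq_sqrt (by positivity)
  set s := Real.sqrt (d ^ 2 + 8) with hs_def
  have hs_gt2 : 2 < s := by nlinarith
  have hsd : d < s := by nlinarith
  have hx0pos : 0 < (2 - d + s) / 2 := by linarith
  have hden : 0 < 4 + d + s := by linarith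
  have key1 : 1 / (d + 1 + (2 - d + s) / 2) = 2 / (4 + d + s) := by
    rw [div_eq_div_iff (by linarith : (0:ℝ) < _).ne' hden.ne']; ring
  have key2 : (2 - d + s) / 2 / (d + 1 + 3 * ((2 - d + s) / 2)) = 2 / (4 + d + s) := by
    rw [div_eq_div_iff (by linarith : (0:ℝ) < _).ne' hden.ne']
    linear_combination (1 / 2 : ℝ) * hs2
  apply le_antisymm
  · apply csInf_le
    · refine ⟨0, ?_⟩
      rintro y ⟨x, hx, rfl⟩
      have h1 : 0 ≤ 1 / (d + 1 + x) := by positivity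
      exact le_trans h1 (le_max_left _ _)
    · exact ⟨(2 - d + s) / 2, hx0pos, by rw [key1, key2, max_self]⟩
  · apply le_csInf
    · exact ⟨_, (2 - d + s) / 2, hx0pos, rfl⟩
    · rintro y ⟨x, hx, rfl⟩
      rcases le_total x ((2 - d + s) / 2) with h | h
      · refine le_trans ?_ (le_max_left _ _)
        rw [div_le_div_iff₀ hden (by linarith)]
        linarith
      · refine le_trans ?_ (le_max_right _ _)
        rw [div_le_div_iff₀ hden (by linarith)]
        nlinarith [mul_nonneg (sub_nonneg.2 h) (by linarith : (0:ℝ) ≤ d + s - 2)]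
end

section
/- The infimum over all real b > 0 of max{ (infimum over all real c > 0 of max{1/(1 + b + c), c/(1 + b + 2c)}), (infimum over all real c' > 0 of max{c'/(1 + b + 2c'), b/(1 + 2b + c')}) } equals 2 − √3. -/
theorem decision_tree_value_medium_delay :
    sInf {y : ℝ | ∃ b : ℝ, 0 < b ∧
        y = max
          (sInf {z : ℝ | ∃ c : ℝ, 0 < c ∧
            z = max (1 / (1 + b + c)) (c / (1 + b + 2 * c))})
          (sInf {z : ℝ | ∃ c' : ℝ, 0 < c' ∧
            z = max (c' / (1 + b + 2 * c')) (b / (1 + 2 * b + c'))})} =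
      2 - Real.sqrt 3 := by
  have hs : Real.sqrt 3 ^ 2 = 3 := Real.sq_sqrt (by norm_num)
  have hs0 : 0 ≤ Real.sqrt 3 := Real.sqrt_nonneg 3
  set s := Real.sqrt 3 with hsdef
  have hs1 : 1 < s := by nlinarith
  have hs2 : s < 2 := by nlinarith
  have hs32 : 3/2 < s := by nlinarith
  have hs53 : 5/3 < s := by nlinarith
  set A : ℝ := 2 - s with hA
  set b0 : ℝ := (1 + s) / 2 with hb0
  have hApos : 0 < A := by simp only [hA]; linarith
  have hb0pos : 0 < b0 := by simp only [hb0]; linarith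
  have hb0s : 2 * b0 = 1 + s := by simp only [hb0]; ring
  -- lower bound for inner set 1 when b ≤ b0
  have h1lb : ∀ b : ℝ, 0 < b → b ≤ b0 → ∀ c : ℝ, 0 < c →
      A ≤ max (1 / (1 + b + c)) (c / (1 + b + 2 * c)) := by
    intro b hb hbb c hc
    rcases le_total c (1 + s - b) with h | h
    · refine le_trans ?_ (le_max_left _ _)
      rw [le_div_iff₀ (by linarith)]
      nlinarith
    · refine le_trans ?_ (le_max_right _ _)
      rw [le_div_iff₀ (by linarith)]
      -- A * (1 + b + 2c) ≤ c ⇔ c*(2s-3) ≥ (2-s)(1+b)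
      nlinarith [mul_le_mul_of_nonneg_right hbb (by linarith : (0:ℝ) ≤ 2*s - 3)]
  -- lower bound for inner set 2 when b ≥ b0
  have h2lb : ∀ b : ℝ, b0 ≤ b → ∀ c : ℝ, 0 < c →
      A ≤ max (c / (1 + b + 2 * c)) (b / (1 + 2 * b + c)) := by
    intro b hb c hc
    have hbpos : 0 < b := lt_of_lt_of_le hb0pos hb
    have hAg : A * (1 + 3 * b) ≤ b := by
      -- (2-s)(1+3b) ≤ b ⇔ b(3s-5) ≥ 2-s, true for b ≥ (1+s)/2
      nlinarith [mul_le_mul_of_nonneg_right hb (by linarith : (0:ℝ) ≤ 3*s - 5)]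
    rcases le_total c b with h | h
    · refine le_trans ?_ (le_max_right _ _)
      rw [le_div_iff₀ (by linarith)]
      nlinarith [mul_nonneg hApos.le (sub_nonneg.2 h)]
    · refine le_trans ?_ (le_max_left _ _)
      rw [le_div_iff₀ (by linarith)]
      -- A * (1 + b + 2c) ≤ c
      nlinarith [mul_nonneg (sub_nonneg.2 h) (by linarith : (0:ℝ) ≤ 1 + b),
        mul_le_mul_of_nonneg_right hAg (by linarith : (0:ℝ) ≤ 1 + b + 2*c)]
  -- values at b0, c = b0
  have e1 : 1 / (1 + b0 + b0) = A := by
    rw [div_eq_iff (by linarith)]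
    simp only [hA, hb0]; nlinarith
  have e2 : b0 / (1 + b0 + 2 * b0) = A := by
    rw [div_eq_iff (by linarith)]
    simp only [hA, hb0]; nlinarith
  have e3 : b0 / (1 + 2 * b0 + b0) = A := by
    rw [div_eq_iff (by linarith)]
    simp only [hA, hb0]; nlinarith
  -- inner sInf values at b0
  have i1 : sInf {z : ℝ | ∃ c : ℝ, 0 < c ∧
      z = max (1 / (1 + b0 + c)) (c / (1 + b0 + 2 * c))} = A := by
    apply le_antisymm
    · apply csInf_le
      · exact ⟨A, fun z ⟨c, hc, hz⟩ => hz ▸ h1lb b0 hb0pos le_rfl c hc⟩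
      · exact ⟨b0, hb0pos, by rw [e1, e2, max_self]⟩
    · exact le_csInf ⟨_, b0, hb0pos, rfl⟩
        (fun z ⟨c, hc, hz⟩ => hz ▸ h1lb b0 hb0pos le_rfl c hc)
  have i2 : sInf {z : ℝ | ∃ c' : ℝ, 0 < c' ∧
      z = max (c' / (1 + b0 + 2 * c')) (b0 / (1 + 2 * b0 + c'))} = A := by
    apply le_antisymm
    · apply csInf_le
      · exact ⟨A, fun z ⟨c, hc, hz⟩ => hz ▸ h2lb b0 le_rfl c hc⟩
      · exact ⟨b0, hb0pos, by rw [e2, e3, max_self]⟩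
    · exact le_csInf ⟨_, b0, hb0pos, rfl⟩
        (fun z ⟨c, hc, hz⟩ => hz ▸ h2lb b0 le_rfl c hc)
  -- A is a lower bound of the outer set
  have hlb : ∀ y ∈ {y : ℝ | ∃ b : ℝ, 0 < b ∧
      y = max
        (sInf {z : ℝ | ∃ c : ℝ, 0 < c ∧
          z = max (1 / (1 + b + c)) (c / (1 + b + 2 * c))})
        (sInf {z : ℝ | ∃ c' : ℝ, 0 < c' ∧
          z = max (c' / (1 + b + 2 * c')) (b / (1 + 2 * b + c'))})}, A ≤ y := by
    rintro y ⟨b, hb, rfl⟩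
    rcases le_total b b0 with h | h
    · refine le_trans ?_ (le_max_left _ _)
      exact le_csInf ⟨_, 1, one_pos, rfl⟩
        (fun z ⟨c, hc, hz⟩ => hz ▸ h1lb b hb h c hc)
    · refine le_trans ?_ (le_max_right _ _)
      exact le_csInf ⟨_, 1, one_pos, rfl⟩
        (fun z ⟨c, hc, hz⟩ => hz ▸ h2lb b h c hc)
  -- A is a member of the outer set
  have hmem : A ∈ {y : ℝ | ∃ b : ℝ, 0 < b ∧
      y = max
        (sInf {z : ℝ | ∃ c : ℝ, 0 < c ∧
          z = max (1 / (1 + b + c)) (c / (1 + b + 2 * c))})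
        (sInf {z : ℝ | ∃ c' : ℝ, 0 < c' ∧
          z = max (c' / (1 + b + 2 * c')) (b / (1 + 2 * b + c'))})} :=
    ⟨b0, hb0pos, by rw [i1, i2, max_self]⟩
  exact le_antisymm (csInf_le ⟨A, hlb⟩ hmem) (le_csInf ⟨A, hmem⟩ hlb)
end

section
/- The infimum over all real b > 0 of max{ (infimum over all real c > 0 of max{1/(2 + b + c), c/(1 + b + 2c)}), (infimum over all real c' > 0 of max{c'/(1 + b + 2c'), b/(1 + 2b + c')}) } equals 1/4. -/
lemma inner1 (b : ℝ) (hb : 0 < b) :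
    sInf {z : ℝ | ∃ c : ℝ, 0 < c ∧
      z = max (1 / (2 + b + c)) (c / (1 + b + 2 * c))} = 1 / (3 + b) := by
  apply IsLeast.csInf_eq
  constructor
  · exact ⟨1, one_pos, by norm_num; rw [show (2:ℝ) + b + 1 = 3 + b by ring,
      show (1:ℝ) + b + 2 = 3 + b by ring, max_self]⟩
  · rintro z ⟨c, hc, rfl⟩
    rcases le_total c 1 with h | h
    · refine le_trans ?_ (le_max_left _ _)
      rw [div_le_div_iff₀ (by linarith) (by linarith)]
      nlinarith
    · refine le_trans ?_ (le_max_right _ _)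
      rw [div_le_div_iff₀ (by linarith) (by linarith)]
      nlinarith

lemma inner2 (b : ℝ) (hb : 0 < b) :
    sInf {z : ℝ | ∃ c' : ℝ, 0 < c' ∧
      z = max (c' / (1 + b + 2 * c')) (b / (1 + 2 * b + c'))} = b / (1 + 3 * b) := by
  apply IsLeast.csInf_eq
  constructor
  · exact ⟨b, hb, by rw [show (1:ℝ) + b + 2 * b = 1 + 3 * b by ring,
      show (1:ℝ) + 2 * b + b = 1 + 3 * b by ring, max_self]⟩
  · rintro z ⟨c, hc, rfl⟩
    rcases le_total c b with h | h
    · refine le_trans ?_ (le_max_right _ _)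
      rw [div_le_div_iff₀ (by linarith) (by linarith)]
      nlinarith
    · refine le_trans ?_ (le_max_left _ _)
      rw [div_le_div_iff₀ (by linarith) (by linarith)]
      nlinarith

theorem decision_tree_value_small_delay :
    sInf {y : ℝ | ∃ b : ℝ, 0 < b ∧
        y = max
          (sInf {z : ℝ | ∃ c : ℝ, 0 < c ∧
            z = max (1 / (2 + b + c)) (c / (1 + b + 2 * c))})
          (sInf {z : ℝ | ∃ c' : ℝ, 0 < c' ∧
            z = max (c' / (1 + b + 2 * c')) (b / (1 + 2 * b + c'))})} =
      1 / 4 := by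
  have hset : {y : ℝ | ∃ b : ℝ, 0 < b ∧
        y = max
          (sInf {z : ℝ | ∃ c : ℝ, 0 < c ∧
            z = max (1 / (2 + b + c)) (c / (1 + b + 2 * c))})
          (sInf {z : ℝ | ∃ c' : ℝ, 0 < c' ∧
            z = max (c' / (1 + b + 2 * c')) (b / (1 + 2 * b + c'))})}
      = {y : ℝ | ∃ b : ℝ, 0 < b ∧ y = max (1 / (3 + b)) (b / (1 + 3 * b))} := by
    ext y
    constructor
    · rintro ⟨b, hb, rfl⟩
      exact ⟨b, hb, by rw [inner1 b hb, inner2 b hb]⟩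
    · rintro ⟨b, hb, rfl⟩
      exact ⟨b, hb, by rw [inner1 b hb, inner2 b hb]⟩
  rw [hset]
  apply IsLeast.csInf_eq
  constructor
  · exact ⟨1, one_pos, by norm_num⟩
  · rintro y ⟨b, hb, rfl⟩
    rcases le_total b 1 with h | h
    · refine le_trans ?_ (le_max_left _ _)
      rw [div_le_div_iff₀ (by norm_num) (by linarith)]
      linarith
    · refine le_trans ?_ (le_max_right _ _)
      rw [div_le_div_iff₀ (by norm_num) (by linarith)]
      linarith
end

section
/- Let n ≥ 3 be an integer and let T be a real number with T ≥ 1/(2^{n−1} − 2). Suppose real sequences (t_i)_{2 ≤ i ≤ n−1} and (τ_i)_{1 ≤ i ≤ n−1} satisfy τ_1 = 2, τ_i = 2t_i − τ_{i−1} + 2 for 2 ≤ i ≤ n−1, and t_i ≤ τ_{i−1} − 2^{n−1−i}·T for 2 ≤ i ≤ n−1. Then τ_{n−1} ≤ 2n − 3. -/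
theorem eta_bound_Al2 (n : ℕ) (hn : 3 ≤ n) (T : ℝ)
    (hT : T ≥ 1 / ((2 : ℝ) ^ (n - 1) - 2))
    (t τ : ℕ → ℝ) (hτ1 : τ 1 = 2)
    (hτ : ∀ i, 2 ≤ i → i ≤ n - 1 → τ i = 2 * t i - τ (i - 1) + 2)
    (ht : ∀ i, 2 ≤ i → i ≤ n - 1 → t i ≤ τ (i - 1) - 2 ^ (n - 1 - i) * T) :
    τ (n - 1) ≤ 2 * (n : ℝ) - 3 := by
  have hpos : (0:ℝ) < (2:ℝ)^(n-1) - 2 := by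
    have h4 : (4:ℝ) ≤ 2^(n-1) := by
      calc (4:ℝ) = 2^2 := by norm_num
      _ ≤ 2^(n-1) := by
        apply pow_le_pow_right₀ (by norm_num)
        omega
    linarith
  have hT1 : 1 ≤ T * ((2:ℝ)^(n-1) - 2) := by
    rw [ge_iff_le, div_le_iff₀ hpos] at hT; linarith
  have hTpos : 0 < T := by nlinarith
  have key : ∀ k, 1 ≤ k → k ≤ n - 1 →
      τ k ≤ 2 * k - T * ((2:ℝ)^(n-1) - 2^(n-k)) := by
    intro k
    induction k with
    | zero => omega
    | succ k ih =>
      intro h1 h2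
      rcases Nat.lt_or_ge 1 (k+1) with h | h
      · have hk1 : 1 ≤ k := by omega
        have hk2 : k ≤ n - 1 := by omega
        have ihk := ih hk1 hk2
        have e1 := hτ (k+1) (by omega) h2
        have e2 := ht (k+1) (by omega) h2
        rw [Nat.add_sub_cancel] at e1 e2
        have p1 : (2:ℝ)^(n-(k+1)) = 2 * 2^(n-1-(k+1)) := by
          have : n-(k+1) = (n-1-(k+1)) + 1 := by omega
          rw [this, pow_succ]; ring
        have p2 : (2:ℝ)^(n-k) = 2 * 2^(n-(k+1)) := by
          have : n-k = (n-(k+1)) + 1 := by omega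
          rw [this, pow_succ]; ring
        have hc : ((k:ℝ)+1) = ((k+1 : ℕ) : ℝ) := by push_cast; ring
        rw [e1]
        push_cast
        nlinarith [e2, ihk, hTpos]
      · have hk0 : k = 0 := by omega
        subst hk0
        simp only [hτ1]
        norm_num
  have hfin := key (n-1) (by omega) (le_refl _)
  have hnn : n - (n-1) = 1 := by omega
  rw [hnn] at hfin
  have hc : ((n:ℝ) - 1) = ((n-1 : ℕ) : ℝ) := by
    have : (1:ℕ) ≤ n := by omega
    push_cast [this]; ring
  norm_num at hfin
  nlinarith [hfin]
end

section
/- Let n ≥ 4 be an integer and let T be a real number with T ≥ 1/(2^{n−3} + 1). Suppose real numbers t_2, …, t_{n−1} satisfy t_2 ≥ 1 + T and 2 − t_{i+1} < (2 − t_i)/2 for all 2 ≤ i ≤ n−2. Then t_{n−1} > 2 − T. -/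
theorem two_requests_dichotomy (n : ℕ) (hn : 4 ≤ n) (T : ℝ)
    (hT : T ≥ 1 / ((2 : ℝ) ^ (n - 3) + 1))
    (t : ℕ → ℝ) (ht2 : t 2 ≥ 1 + T)
    (hlate : ∀ i, 2 ≤ i → i ≤ n - 2 → 2 - t (i + 1) < (2 - t i) / 2) :
    t (n - 1) > 2 - T := by
  obtain ⟨m, rfl⟩ : ∃ m, n = m + 4 := ⟨n - 4, by omega⟩
  have hT' : T ≥ 1 / ((2 : ℝ) ^ (m + 1) + 1) := by
    have : m + 4 - 3 = m + 1 := by omega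
    rwa [this] at hT
  have key : ∀ k, k ≤ m → 2 - t (k + 2) ≤ (1 - T) / 2 ^ k := by
    intro k
    induction k with
    | zero => intro _; simpa using by linarith
    | succ k ih =>
      intro hk
      have h1 := ih (by omega)
      have h2 := hlate (k + 2) (by omega) (by omega)
      have hp : (0 : ℝ) < 2 ^ k := by positivity
      rw [pow_succ, ← div_div]
      linarith
  have h1 := key m le_rfl
  have h2 := hlate (m + 2) (by omega) (by omega)
  have h3 : 2 - t (m + 3) < (1 - T) / 2 ^ (m + 1) := by
    rw [pow_succ, ← div_div]
    linarith
  have hp : (0 : ℝ) < 2 ^ (m + 1) := by positivity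
  rw [ge_iff_le, div_le_iff₀ (by positivity)] at hT'
  have hgoal : t (m + 3) > 2 - T := by
    rw [lt_div_iff₀ hp] at h3
    nlinarith
  have : m + 4 - 1 = m + 3 := by omega
  rwa [this]
end
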